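/- arXiv:2205.08532 — 2 statements merged into one kernel-verified Lean document; each statement's English description precedes it below -/
import Mathlib

section
/- Let X ∼ N(0,Σ) on ℝ^d with Σ positive semidefinite, and let M := E[(X ⊗ X)(X ⊗ X)^⊤] ∈ ℝ^{d²×d²}. Then for every v ∈ ℝ^{d²}: v^⊤ M v = v^⊤ Σ^{⊗2} v + v^⊤ Σ^{⊗2} [((v^#)^⊤)^♭] + (v^⊤ Σ^♭)², where Σ^{⊗2} = Σ ⊗ Σ. -/
open MeasureTheory ProbabilityTheory Matrix Set
open scoped Kronecker

noncomputable section

instance {d : ℕ} : MeasurableSpace (Matrix (Fin d) (Fin d) ℝ) :=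
  inferInstanceAs (MeasurableSpace (Fin d → Fin d → ℝ))

/-- The standard Gaussian measure on `ℝ^d`. -/
def stdGaussian (d : ℕ) : Measure (Fin d → ℝ) :=
  Measure.pi fun _ : Fin d => gaussianReal 0 1

open Classical in
/-- The positive semidefinite square root of a positive semidefinite matrix
(junk value `0` if the matrix is not positive semidefinite). -/
def matSqrt {d : ℕ} (S : Matrix (Fin d) (Fin d) ℝ) : Matrix (Fin d) (Fin d) ℝ :=
  if h : S.PosSemidef then
    (h.1.eigenvectorUnitary : Matrix (Fin d) (Fin d) ℝ) *
      diagonal ((↑) ∘ (√·) ∘ h.1.eigenvalues) *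
      (star h.1.eigenvectorUnitary : Matrix (Fin d) (Fin d) ℝ)
  else 0

/-- The centered multivariate Gaussian measure `N(0, S)` on `ℝ^d`, realized as the
pushforward of the standard Gaussian under `x ↦ S^{1/2} x`. -/
def mvGaussian {d : ℕ} (S : Matrix (Fin d) (Fin d) ℝ) : Measure (Fin d → ℝ) :=
  Measure.map (fun x => (matSqrt S) *ᵥ x) (stdGaussian d)

/-!
For a centred Gaussian measure every continuous linear functional `L` has law `N(0, Var L)`, whose
fourth moment `3 (Var L)²` is the fourth derivative at `0` of the moment generating function
`t ↦ exp (Var L · t² / 2)`. Writing `x₁x₂x₃x₄` as a signed sum of eight fourth powers of linear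
combinations of the `xᵢ` and integrating turns this into Isserlis' formula
`E[L₁L₂L₃L₄] = C₁₂C₃₄ + C₁₃C₂₄ + C₁₄C₂₃` for the covariance form `C`. As `N(0, Σ)` is the
multivariate Gaussian with coordinate covariances `Σᵢⱼ`, the entries of `M` are the three pairings
`Σ_{ab}Σ_{ce} + Σ_{ac}Σ_{be} + Σ_{ae}Σ_{bc}`, which give the three terms of `vᵀMv`.
-/

open scoped MatrixOrder NNReal

def signTriples : Finset (ℝ × ℝ × ℝ) := {1, -1} ×ˢ {1, -1} ×ˢ {1, -1}

-- The signed sum keeps only the monomial `t₂t₃t₄` of the quartic `t ↦ B (u t) (u t) ^ 2`,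
-- `u t = u₁ + t₂ u₂ + t₃ u₃ + t₄ u₄`, and multiplies its coefficient by `8`.
theorem sum_signTriples_mul_bilin_sq {V : Type*} [AddCommGroup V] [Module ℝ V]
    (B : V →ₗ[ℝ] V →ₗ[ℝ] ℝ) (hB : ∀ x y, B x y = B y x) (u₁ u₂ u₃ u₄ : V) :
    ∑ ε ∈ signTriples, ε.1 * ε.2.1 * ε.2.2 *
        B (u₁ + ε.1 • u₂ + ε.2.1 • u₃ + ε.2.2 • u₄) (u₁ + ε.1 • u₂ + ε.2.1 • u₃ + ε.2.2 • u₄) ^ 2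
      = 64 * (B u₁ u₂ * B u₃ u₄ + B u₁ u₃ * B u₂ u₄ + B u₁ u₄ * B u₂ u₃) := by
  simp only [map_add, map_smul, LinearMap.add_apply, LinearMap.smul_apply, smul_eq_mul,
    hB u₂ u₁, hB u₃ u₁, hB u₄ u₁, hB u₃ u₂, hB u₄ u₂, hB u₄ u₃, signTriples, Finset.sum_product,
    Finset.sum_pair (show (1 : ℝ) ≠ -1 by norm_num)]
  ring

theorem mul_mul_mul_eq_sum_signTriples (x₁ x₂ x₃ x₄ : ℝ) :
    x₁ * x₂ * x₃ * x₄ = 192⁻¹ * ∑ ε ∈ signTriples,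
      ε.1 * ε.2.1 * ε.2.2 * (x₁ + ε.1 * x₂ + ε.2.1 * x₃ + ε.2.2 * x₄) ^ 4 := by
  have h := sum_signTriples_mul_bilin_sq (LinearMap.mul ℝ ℝ) mul_comm x₁ x₂ x₃ x₄
  simp only [LinearMap.mul_apply', smul_eq_mul] at h
  simp only [fun y : ℝ => show y ^ 4 = (y * y) ^ 2 by ring, h]
  ring

theorem integral_pow_four_gaussianReal (v : ℝ≥0) :
    ∫ x, x ^ 4 ∂(gaussianReal 0 v) = 3 * (v : ℝ) ^ 2 := by
  have h := iteratedDeriv_mgf_zero (X := id) (μ := gaussianReal 0 v) (by simp) 4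
  simp only [mgf_id_gaussianReal, zero_mul, zero_add, Pi.pow_apply, id_eq] at h
  rw [← h]
  set g : ℝ → ℝ := fun t => Real.exp (v * t ^ 2 / 2)
  have hg : ∀ t, HasDerivAt g (v * t * g t) t := fun t => by
    convert ((hasDerivAt_pow 2 t).const_mul (v : ℝ)).div_const 2 |>.exp using 1
    simp [g]; ring
  have deriv_mul_g : ∀ p : ℝ → ℝ, Differentiable ℝ p →
      deriv (fun t => p t * g t) = fun t => (deriv p t + v * t * p t) * g t := fun p hp => by
    ext t
    rw [((hp t).hasDerivAt.fun_mul (hg t)).deriv]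
    ring
  have d1 : deriv g = fun t => v * t * g t := funext fun t => (hg t).deriv
  have d2 : deriv (fun t => v * t * g t) = fun t => (v + v ^ 2 * t ^ 2) * g t := by
    rw [deriv_mul_g _ (by fun_prop)]
    ext t; congr 1; simp; ring
  have d3 : deriv (fun t => (v + v ^ 2 * t ^ 2) * g t)
      = fun t => (3 * v ^ 2 * t + v ^ 3 * t ^ 3) * g t := by
    rw [deriv_mul_g _ (by fun_prop)]
    ext t; congr 1; simp; ring
  have d4 : deriv (fun t => (3 * v ^ 2 * t + v ^ 3 * t ^ 3) * g t)
      = fun t => (3 * v ^ 2 + 6 * v ^ 3 * t ^ 2 + v ^ 4 * t ^ 4) * g t := by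
    rw [deriv_mul_g _ (by fun_prop)]
    ext t; congr 1; rw [deriv_fun_add (by fun_prop) (by fun_prop)]; simp; ring
  simp only [iteratedDeriv_succ', iteratedDeriv_zero, d1, d2, d3, d4, g]
  simp

namespace ProbabilityTheory.IsGaussian

variable {E : Type*} [NormedAddCommGroup E] [NormedSpace ℝ E] [MeasurableSpace E] [BorelSpace E]
  {μ : Measure E} [IsGaussian μ]

theorem integrable_dual_pow (L : StrongDual ℝ E) (n : ℕ) :
    Integrable (fun x => L x ^ n) μ :=
  (memLp_dual μ L n (by simp)).integrable_norm_pow' |>.mono'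
    (L.continuous.pow n).aestronglyMeasurable (ae_of_all _ fun x => by simp [norm_pow])

variable [CompleteSpace E] [SecondCountableTopology E]

theorem integral_dual_pow_four (hμ : ∫ x, x ∂μ = 0) (L : StrongDual ℝ E) :
    ∫ x, L x ^ 4 ∂μ = 3 * Var[L; μ] ^ 2 := by
  have hL : μ[L] = 0 := by rw [L.integral_comp_id_comm integrable_id, hμ, map_zero]
  rw [← integral_map (f := fun y => y ^ 4) L.continuous.aemeasurable (by fun_prop),
    map_eq_gaussianReal, hL, integral_pow_four_gaussianReal,
    Real.coe_toNNReal _ (variance_nonneg _ _)]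

theorem integral_dual_mul_four (hμ : ∫ x, x ∂μ = 0) (L₁ L₂ L₃ L₄ : StrongDual ℝ E) :
    ∫ x, L₁ x * L₂ x * L₃ x * L₄ x ∂μ
      = covarianceBilinDual μ L₁ L₂ * covarianceBilinDual μ L₃ L₄
        + covarianceBilinDual μ L₁ L₃ * covarianceBilinDual μ L₂ L₄
        + covarianceBilinDual μ L₁ L₄ * covarianceBilinDual μ L₂ L₃ := by
  set L : ℝ × ℝ × ℝ → StrongDual ℝ E := fun ε => L₁ + ε.1 • L₂ + ε.2.1 • L₃ + ε.2.2 • L₄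
  have hpol : ∀ x, L₁ x * L₂ x * L₃ x * L₄ x
      = 192⁻¹ * ∑ ε ∈ signTriples, ε.1 * ε.2.1 * ε.2.2 * L ε x ^ 4 := fun x => by
    simpa [L] using mul_mul_mul_eq_sum_signTriples (L₁ x) (L₂ x) (L₃ x) (L₄ x)
  have hcov := sum_signTriples_mul_bilin_sq (covarianceBilinDual μ).toBilinForm
    covarianceBilinDual_comm L₁ L₂ L₃ L₄
  simp only [ContinuousLinearMap.toBilinForm_apply] at hcov
  calc ∫ x, L₁ x * L₂ x * L₃ x * L₄ x ∂μ
      = 192⁻¹ * ∑ ε ∈ signTriples, ε.1 * ε.2.1 * ε.2.2 * ∫ x, L ε x ^ 4 ∂μ := by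
        simp_rw [hpol, integral_const_mul]
        rw [integral_finsetSum _ fun ε _ => (integrable_dual_pow (L ε) 4).const_mul _]
        simp_rw [integral_const_mul]
    _ = 192⁻¹ * 3 * ∑ ε ∈ signTriples,
          ε.1 * ε.2.1 * ε.2.2 * covarianceBilinDual μ (L ε) (L ε) ^ 2 := by
        simp_rw [integral_dual_pow_four hμ, covarianceBilinDual_self_eq_variance memLp_two_id,
          mul_assoc (192⁻¹ : ℝ), Finset.mul_sum]
        exact Finset.sum_congr rfl fun ε _ => by ring
    _ = _ := by
        rw [hcov]
        ring

end ProbabilityTheory.IsGaussian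

theorem matSqrt_eq_cfcSqrt {d : ℕ} {S : Matrix (Fin d) (Fin d) ℝ} (hS : S.PosSemidef) :
    matSqrt S = CFC.sqrt S := by
  rw [CFC.sqrt_eq_cfc, cfc_nnreal_eq_real _ S, hS.1.cfc_eq, matSqrt, dif_pos hS]
  simp [IsHermitian.cfc, Unitary.conjStarAlgAut_apply, Function.comp_def,
    max_eq_left (hS.eigenvalues_nonneg _)]

theorem mvGaussian_eq_map_multivariateGaussian {d : ℕ} {S : Matrix (Fin d) (Fin d) ℝ}
    (hS : S.PosSemidef) :
    mvGaussian S = (multivariateGaussian 0 S).map (MeasurableEquiv.toLp 2 (Fin d → ℝ)).symm := by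
  rw [multivariateGaussian, ← map_pi_eq_stdGaussian, Measure.map_map (by fun_prop) (by fun_prop),
    Measure.map_map (by fun_prop) (by fun_prop), mvGaussian, _root_.stdGaussian,
    matSqrt_eq_cfcSqrt hS]
  congr 1
  ext x
  simp

theorem integral_mul_mul_mul_mvGaussian {d : ℕ} {S : Matrix (Fin d) (Fin d) ℝ}
    (hS : S.PosSemidef) (a b c e : Fin d) :
    ∫ x, (x a * x b) * (x c * x e) ∂(mvGaussian S)
      = S a b * S c e + S a c * S b e + S a e * S b c := by
  have hcov : ∀ i j, covarianceBilinDual (multivariateGaussian 0 S)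
      (EuclideanSpace.proj i) (EuclideanSpace.proj j) = S i j := fun i j => by
    rw [covarianceBilinDual_eq_covariance IsGaussian.memLp_two_id, EuclideanSpace.coe_proj,
      EuclideanSpace.coe_proj, covariance_eval_multivariateGaussian hS]
  rw [mvGaussian_eq_map_multivariateGaussian hS, integral_map_equiv]
  simpa [hcov, mul_assoc] using IsGaussian.integral_dual_mul_four
    (μ := multivariateGaussian 0 S) (by simp) (EuclideanSpace.proj a) (EuclideanSpace.proj b)
    (EuclideanSpace.proj c) (EuclideanSpace.proj e)

theorem dotProduct_mulVec_sum_pairings {n R : Type*} [Fintype n] [CommRing R]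
    (S : Matrix n n R) (v : n × n → R) :
    v ⬝ᵥ ((Matrix.of fun p q : n × n =>
        S p.1 p.2 * S q.1 q.2 + S p.1 q.1 * S p.2 q.2 + S p.1 q.2 * S p.2 q.1) *ᵥ v)
      = v ⬝ᵥ ((S ⊗ₖ S) *ᵥ v) + v ⬝ᵥ ((S ⊗ₖ S) *ᵥ (fun p => v (p.2, p.1)))
        + (v ⬝ᵥ (fun p => S p.1 p.2)) ^ 2 := by
  have hswap : ∀ p : n × n, ∑ q : n × n, S p.1 q.1 * S p.2 q.2 * v (q.2, q.1)
      = ∑ q : n × n, S p.1 q.2 * S p.2 q.1 * v q :=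
    fun p => Fintype.sum_equiv (Equiv.prodComm n n) _ _ fun _ => rfl
  simp only [dotProduct, mulVec, of_apply, kroneckerMap_apply, hswap, sq, Finset.mul_sum,
    Finset.sum_mul, ← Finset.sum_add_distrib]
  exact Finset.sum_congr rfl fun p _ => Finset.sum_congr rfl fun q _ => by ring

/-- **Fourth-moment identity for centered Gaussians.**
For `X ∼ N(0, Σ)` with `Σ` positive semidefinite and
`M = E[(X ⊗ X)(X ⊗ X)^⊤]`, every `v ∈ ℝ^{d²}` satisfies
`v^⊤Mv = v^⊤Σ^{⊗2}v + v^⊤Σ^{⊗2}((v^#)^⊤)^♭ + (v^⊤Σ^♭)²`. -/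
theorem gaussian_fourth_moment_bilinear
    {d : ℕ} (S : Matrix (Fin d) (Fin d) ℝ) (hS : S.PosSemidef)
    (v : Fin d × Fin d → ℝ) :
    v ⬝ᵥ ((Matrix.of fun p q : Fin d × Fin d =>
        ∫ x, (x p.1 * x p.2) * (x q.1 * x q.2) ∂(mvGaussian S)) *ᵥ v)
      = v ⬝ᵥ ((S ⊗ₖ S) *ᵥ v)
        + v ⬝ᵥ ((S ⊗ₖ S) *ᵥ (fun p => v (p.2, p.1)))
        + (v ⬝ᵥ (fun p => S p.1 p.2)) ^ 2 := by
  simp only [integral_mul_mul_mul_mvGaussian hS]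
  exact dotProduct_mulVec_sum_pairings S v
end
end

section
/- Let μ ∈ ℝ^d and X ∼ N(μ, I_d). For every τ ≥ 2d: ∫_τ^∞ P( ‖X − μ‖₂ > t/(2√d) ) dt ≤ √(2πd) · exp( −(√(τ² − 2d²) − √2·d)² / (8d) ). -/
/-!
Chernoff's bound, with `𝔼 exp (c ‖X - μ‖²) = (1 - 2c)^(-d/2)`, at the optimal `c` gives the
Laurent–Massart tail `P(‖X - μ‖² ≥ d (1 + 2w + 2w²)) ≤ exp (-d w²)`, because
`1 + 2w + 2w² ≤ exp (2w)`. For `t ≥ 2d` the threshold `t² / (4d)` corresponds to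
`d w² = g(t)² / (8d)` with `g(t) = √(t² - 2d²) - √2 d`. As `g(t) - g(τ) ≥ t - τ ≥ 0` for
`t ≥ τ`, we get `g(t)² ≥ g(τ)² + (t - τ)²`, so the integrand is dominated by
`exp (-g(τ)² / (8d))` times a half Gaussian started at `τ`, whose integral is `√(2πd)`.
-/

open MeasureTheory ProbabilityTheory Set Real
open scoped NNReal

lemma integral_exp_mul_sq_sub_gaussianReal (m : ℝ) (v : ℝ≥0) {c : ℝ} (hc : 2 * c * v < 1) :
    ∫ y, exp (c * (y - m) ^ 2) ∂gaussianReal m v = (√(1 - 2 * c * v))⁻¹ := by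
  rcases eq_or_ne v 0 with rfl | hv
  · simp
  have hpdf : ∀ y, gaussianPDFReal m v y • exp (c * (y - m) ^ 2)
      = (√(2 * π * v))⁻¹ * exp (-(1 / (2 * v) - c) * (y - m) ^ 2) := fun y => by
    rw [gaussianPDFReal, smul_eq_mul, mul_assoc, ← exp_add]
    congr 2
    field_simp
    ring
  simp_rw [integral_gaussianReal_eq_integral_smul hv, hpdf, integral_const_mul]
  rw [integral_sub_right_eq_self (fun y => exp (-(1 / (2 * v) - c) * y ^ 2)) m, integral_gaussian,
    show π / (1 / (2 * v) - c) = 2 * π * v / (1 - 2 * c * v) by field_simp,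
    sqrt_div (by positivity), div_eq_mul_inv, ← mul_assoc, inv_mul_cancel₀ (by positivity), one_mul]

lemma integral_exp_mul_sum_sq_sub_pi_gaussianReal {ι : Type*} [Fintype ι] (μ : ι → ℝ) (v : ℝ≥0)
    {c : ℝ} (hc : 2 * c * v < 1) :
    ∫ x, exp (c * ∑ i, (x i - μ i) ^ 2) ∂Measure.pi (fun i => gaussianReal (μ i) v)
      = (√(1 - 2 * c * v))⁻¹ ^ Fintype.card ι := by
  simp_rw [Finset.mul_sum, exp_sum]
  rw [integral_fintype_prod_eq_prod (fun i y => exp (c * (y - μ i) ^ 2))]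
  simp_rw [integral_exp_mul_sq_sub_gaussianReal _ v hc, Finset.prod_const, Finset.card_univ]

lemma measureReal_le_sum_sq_sub_le {ι : Type*} [Fintype ι] (μ : ι → ℝ) (v : ℝ≥0)
    {c : ℝ} (hc₀ : 0 ≤ c) (hc : 2 * c * v < 1) (a : ℝ) :
    (Measure.pi fun i => gaussianReal (μ i) v).real {x | a ≤ ∑ i, (x i - μ i) ^ 2}
      ≤ exp (-c * a) * (√(1 - 2 * c * v))⁻¹ ^ Fintype.card ι := by
  have hmoment := integral_exp_mul_sum_sq_sub_pi_gaussianReal μ v hc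
  have hint : Integrable (fun x => exp (c * ∑ i, (x i - μ i) ^ 2))
      (Measure.pi fun i => gaussianReal (μ i) v) :=
    .of_integral_ne_zero (by rw [hmoment]; positivity)
  simpa only [mgf, hmoment] using measure_ge_le_exp_mul_mgf a hc₀ hint

lemma measureReal_le_sum_sq_sub_le_exp {ι : Type*} [Fintype ι] (μ : ι → ℝ) {v : ℝ≥0}
    (hv : v ≠ 0) {w : ℝ} (hw : 0 ≤ w) :
    (Measure.pi fun i => gaussianReal (μ i) v).real
        {x | v * Fintype.card ι * (1 + 2 * w + 2 * w ^ 2) ≤ ∑ i, (x i - μ i) ^ 2}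
      ≤ exp (-Fintype.card ι * w ^ 2) := by
  set n : ℕ := Fintype.card ι
  set q : ℝ := 1 + 2 * w + 2 * w ^ 2
  have hq : 0 < q := by positivity
  have hq_le : √q ≤ exp w := by
    rw [sqrt_le_left (exp_pos w).le, sq, ← exp_add]
    nlinarith [quadratic_le_exp_of_nonneg (by positivity : 0 ≤ w + w)]
  -- the optimal Chernoff parameter for the threshold `v n q`
  set c : ℝ := (w + w ^ 2) / (v * q)
  have hc : 1 - 2 * c * v = q⁻¹ := by simp only [c, q]; field_simp; ring
  calc _ ≤ exp (-c * (v * n * q)) * (√(1 - 2 * c * v))⁻¹ ^ n :=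
        measureReal_le_sum_sq_sub_le μ v (by positivity) (by linarith [inv_pos.2 hq]) _
    _ = exp (-n * (w + w ^ 2)) * √q ^ n := by
        rw [hc, sqrt_inv, inv_inv]; congr 2; simp only [c]; field_simp
    _ ≤ exp (-n * (w + w ^ 2)) * exp w ^ n := by gcongr
    _ = exp (-n * w ^ 2) := by rw [← exp_nat_mul, ← exp_add]; ring_nf

lemma integral_Ioi_exp_neg_mul_sq_sub (b a : ℝ) :
    ∫ t in Ioi a, exp (-b * (t - a) ^ 2) = √(π / b) / 2 := by
  have hshift := (measurePreserving_sub_right volume a).setIntegral_preimage_emb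
    (measurableEmbedding_subRight a) (fun t => exp (-b * t ^ 2)) (Ioi 0)
  rwa [preimage_sub_const_Ioi, zero_add, integral_gaussian_Ioi] at hshift

lemma sub_le_sqrt_sq_sub_sub_sqrt_sq_sub {c s t : ℝ} (hc : 0 ≤ c) (hs : c ≤ s ^ 2) (hs₀ : 0 ≤ s)
    (hst : s ≤ t) : t - s ≤ √(t ^ 2 - c) - √(s ^ 2 - c) := by
  have hA := sq_sqrt (by nlinarith : 0 ≤ t ^ 2 - c)
  have hB := sq_sqrt (sub_nonneg.2 hs)
  have hAt : √(t ^ 2 - c) ≤ t := (sqrt_le_left (by linarith)).2 (by linarith)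
  have hBs : √(s ^ 2 - c) ≤ s := (sqrt_le_left hs₀).2 (by linarith)
  nlinarith [sqrt_nonneg (t ^ 2 - c), sqrt_nonneg (s ^ 2 - c)]

lemma sqrt_two_mul_le_sqrt_sq_sub {d s : ℝ} (hd : 0 ≤ d) (hs : 2 * d ≤ s) :
    √2 * d ≤ √(s ^ 2 - 2 * d ^ 2) := by
  rw [show √2 * d = √(2 * d ^ 2) by rw [sqrt_mul zero_le_two, sqrt_sq hd]]
  exact sqrt_le_sqrt (by nlinarith)

lemma exp_neg_sq_sqrt_sq_sub_le {d s t : ℝ} (hd : 0 < d) (hs : 2 * d ≤ s) (hst : s ≤ t) :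
    exp (-(√(t ^ 2 - 2 * d ^ 2) - √2 * d) ^ 2 / (8 * d))
      ≤ exp (-(√(s ^ 2 - 2 * d ^ 2) - √2 * d) ^ 2 / (8 * d)) * exp (-(8 * d)⁻¹ * (t - s) ^ 2) := by
  have hg₀ := sqrt_two_mul_le_sqrt_sq_sub hd.le hs
  have hg := sub_le_sqrt_sq_sub_sub_sqrt_sq_sub (c := 2 * d ^ 2) (by positivity) (by nlinarith)
    (by linarith) hst
  have hsq : (√(s ^ 2 - 2 * d ^ 2) - √2 * d) ^ 2 + (t - s) ^ 2
      ≤ (√(t ^ 2 - 2 * d ^ 2) - √2 * d) ^ 2 := by nlinarith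
  rw [← exp_add, exp_le_exp]
  simp only [div_eq_inv_mul]
  nlinarith [mul_le_mul_of_nonneg_left hsq (by positivity : (0 : ℝ) ≤ (8 * d)⁻¹)]

lemma measureReal_div_lt_sqrt_sum_sq_sub_le {d : ℕ} (hd : 0 < d) (μ : Fin d → ℝ) {t : ℝ}
    (ht : 2 * (d : ℝ) ≤ t) :
    (Measure.pi fun j : Fin d => gaussianReal (μ j) 1).real
        {x | t / (2 * √d) < √(∑ j, (x j - μ j) ^ 2)}
      ≤ exp (-(√(t ^ 2 - 2 * (d : ℝ) ^ 2) - √2 * d) ^ 2 / (8 * d)) := by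
  have hd' : (0 : ℝ) < d := by exact_mod_cast hd
  set r := √(t ^ 2 - 2 * (d : ℝ) ^ 2)
  have hr : r ^ 2 = t ^ 2 - 2 * d ^ 2 := sq_sqrt (by nlinarith)
  have hr₀ : √2 * d ≤ r := sqrt_two_mul_le_sqrt_sq_sub hd'.le ht
  have h2 : √2 ^ 2 = 2 := sq_sqrt zero_le_two
  -- `w` is chosen so that the Laurent–Massart threshold `d (1 + 2w + 2w²)` equals `t² / (4d)`
  set w := (r / (√2 * d) - 1) / 2
  have hw : 0 ≤ w := by
    have : 1 ≤ r / (√2 * d) := (one_le_div (by positivity)).2 hr₀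
    simp only [w]; linarith
  have hthreshold : ((1 : ℝ≥0) : ℝ) * Fintype.card (Fin d) * (1 + 2 * w + 2 * w ^ 2)
      = (t / (2 * √d)) ^ 2 := by
    simp only [w, NNReal.coe_one, Fintype.card_fin, div_pow, mul_pow, sq_sqrt hd'.le]
    field_simp
    linear_combination 2 * hr + (2 * (d : ℝ) ^ 2 - t ^ 2) * h2
  have hexponent : -(Fintype.card (Fin d) : ℝ) * w ^ 2 = -(r - √2 * d) ^ 2 / (8 * d) := by
    simp only [w, Fintype.card_fin]
    field_simp
    rw [h2]
    ring
  calc _ ≤ (Measure.pi fun j : Fin d => gaussianReal (μ j) 1).real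
        {x | (t / (2 * √d)) ^ 2 ≤ ∑ j, (x j - μ j) ^ 2} :=
        measureReal_mono fun x hx => ((lt_sqrt (div_nonneg (by linarith) (by positivity))).1 hx).le
    _ ≤ _ := by
        rw [← hthreshold, ← hexponent]
        exact measureReal_le_sum_sq_sub_le_exp μ one_ne_zero hw

/-- **Chi-squared tail-integral bound.**
For `X ∼ N(μ, I_d)` and every `τ ≥ 2d`,
`∫_τ^∞ P(‖X − μ‖₂ > t/(2√d)) dt ≤ √(2πd)·exp(−(√(τ² − 2d²) − √2·d)²/(8d))`. -/
theorem gaussian_norm_tail_integral_bound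
    {d : ℕ} (μ : Fin d → ℝ) (τ : ℝ) (hτ : 2 * (d : ℝ) ≤ τ) :
    (∫ t in Ioi τ,
        ((Measure.pi fun j : Fin d => gaussianReal (μ j) 1)
          {x | t / (2 * Real.sqrt d) < Real.sqrt (∑ j, (x j - μ j) ^ 2)}).toReal)
      ≤ Real.sqrt (2 * Real.pi * d) *
          Real.exp (-(Real.sqrt (τ ^ 2 - 2 * (d : ℝ) ^ 2) - Real.sqrt 2 * d) ^ 2 / (8 * d)) := by
  rcases Nat.eq_zero_or_pos d with rfl | hd
  · simp
  have hd' : (0 : ℝ) < d := by exact_mod_cast hd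
  set C := exp (-(√(τ ^ 2 - 2 * (d : ℝ) ^ 2) - √2 * d) ^ 2 / (8 * d))
  calc _ ≤ ∫ t in Ioi τ, C * exp (-(8 * (d : ℝ))⁻¹ * (t - τ) ^ 2) := by
        refine integral_mono_of_nonneg (.of_forall fun t => ENNReal.toReal_nonneg)
          ((((integrable_exp_neg_mul_sq (by positivity)).comp_sub_right τ).const_mul C).restrict)
          ((ae_restrict_iff' measurableSet_Ioi).2 (.of_forall fun t ht => ?_))
        exact (measureReal_div_lt_sqrt_sum_sq_sub_le hd μ (hτ.trans (le_of_lt ht))).trans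
          (exp_neg_sq_sqrt_sq_sub_le hd' hτ (le_of_lt ht))
    _ = C * √(2 * π * d) := by
        rw [integral_const_mul, integral_Ioi_exp_neg_mul_sq_sub,
          show π / (8 * (d : ℝ))⁻¹ = 2 ^ 2 * (2 * π * d) by field_simp; ring,
          sqrt_mul (by positivity), sqrt_sq zero_le_two]
        ring
    _ = _ := mul_comm _ _
end
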